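/- arXiv:2012.02476 — 4 statements merged into one kernel-verified Lean document; each statement's English description precedes it below -/
import Mathlib

section
/- Suppose S and A are finite nonempty types, γ ∈ [0,1) is a discount factor, R_max ≥ 0, and r : S → A → ℝ is a reward function with |r s a| ≤ R_max for all s, a. For a transition kernel P : S → A → PMF S and a policy π : S → PMF A, let P^π : S → PMF S be given by P^π(s) = (π s).bind (fun a => P s a); for an initial distribution μ : PMF S let μ_t^{π,P} be the t-fold bind iterate (μ_0 = μ, μ_{t+1} = μ_t.bind P^π); define the discounted value J(π,P) = ∑'_t γ^t ∑_s μ_t^{π,P}(s) ∑_a (π s)(a) · r s a and the discounted visitation distribution ρ^{π,P}(s) = (1−γ) ∑'_t γ^t μ_t^{π,P}(s). Let P_w (the true user model) and P_m (the learned meta-level user model) be two transition kernels, let π and π⋆ be policies, and let ε ≥ 0, ε_π ≥ 0 satisfy: (i) ∑_s ρ^{π,P_w}(s) ∑_a (π s)(a) · KL(P_w s a ‖ P_m s a) ≤ ε; (ii) ∑_s ρ^{π⋆,P_w}(s) ∑_a (π⋆ s)(a) · KL(P_w s a ‖ P_m s a) ≤ ε; (iii) J(π, P_m) ≥ J(π',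 P_m) − ε_π for every policy π' : S → PMF A. Then J(π⋆, P_w) − J(π, P_w) ≤ ε_π + 4·γ·R_max·√ε / (1−γ)². -/
/-!
Split `J(π⋆, P_w) - J(π, P_w)` as `[J(π⋆, P_w) - J(π⋆, P_m)] + [J(π⋆, P_m) - J(π, P_m)] +
[J(π, P_m) - J(π, P_w)]`; the middle term is at most `ε_π`, and each outer term is bounded by a
simulation lemma. For a policy `σ`, let `V` be its value function in `P_m`, the fixed point of the
`γ`-contraction `V ↦ g + γ P_m^σ V` (with `g s = ∑_a σ(a|s) r s a`), so `|V| ≤ R_max / (1 - γ)`.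
Testing the flow equation `ρ = (1 - γ) μ + γ ρ P_w^σ` of the visitation distribution against `V`
gives `(1 - γ) (J(σ, P_w) - J(σ, P_m)) = γ ∑_s ρ(s) (P_w^σ V - P_m^σ V)(s)`. Each one-step gap is at
most `‖P_w s a - P_m s a‖₁ R_max / (1 - γ)`, and `‖p - q‖₁ ≤ 2 √KL(p‖q)` because the squared
Hellinger distance `∑ (√p - √q)²` is at most `KL(p‖q)`. Jensen's inequality for `√` under the
weights `ρ(s) σ(a|s)` turns the averaged KL bound `ε` into `2 √ε`.
-/

open scoped ENNReal

/-- The `t`-fold bind iterate of an initial distribution `μ` under transition kernel `P`: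
`μ_0 = μ`, `μ_{t+1} = μ_t.bind P`. -/
noncomputable def stepDist {S : Type*} (P : S → PMF S) (μ : PMF S) : ℕ → PMF S
  | 0 => μ
  | (t + 1) => (stepDist P μ t).bind P

/-- The state transition kernel `P^π(s) = (π s).bind (fun a => P s a)` induced by a
policy `π` in the environment model `P`. -/
noncomputable def polKernel {S A : Type*} (π : S → PMF A) (P : S → A → PMF S) :
    S → PMF S :=
  fun s => (π s).bind (fun a => P s a)

/-- Discounted value of policy `π` in model `P`:
`J(π, P) = ∑'_t γ^t ∑_s μ_t^{π,P}(s) ∑_a (π s)(a) · r s a`. -/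
noncomputable def polValue {S A : Type*} [Fintype S] [Fintype A] (γ : ℝ) (r : S → A → ℝ)
    (μ : PMF S) (π : S → PMF A) (P : S → A → PMF S) : ℝ :=
  ∑' t : ℕ, γ ^ t * ∑ s, (stepDist (polKernel π P) μ t s).toReal *
    ∑ a, (π s a).toReal * r s a

/-- Discounted state visitation distribution of policy `π` in model `P`:
`ρ^{π,P}(s) = (1−γ) ∑'_t γ^t μ_t^{π,P}(s)`. -/
noncomputable def polVisitDist {S A : Type*} (γ : ℝ) (μ : PMF S) (π : S → PMF A)
    (P : S → A → PMF S) (s : S) : ℝ :=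
  (1 - γ) * ∑' t : ℕ, γ ^ t * (stepDist (polKernel π P) μ t s).toReal

/-- Kullback–Leibler divergence `KL(p‖q) = ∑_s p s · log(p s / q s)` on a finite type,
with the conventions `0·log(0/q) = 0` and `KL(p‖q) = ∞` if `p` is not absolutely
continuous with respect to `q`. -/
noncomputable def klDivPMF {S : Type*} [Fintype S] (p q : PMF S) : ℝ≥0∞ :=
  if ∀ s, q s = 0 → p s = 0 then
    ENNReal.ofReal (∑ s, (p s).toReal * Real.log ((p s).toReal / (q s).toReal))
  else ⊤

open Finset

lemma sq_sqrt_sub_sqrt_le_mul_log_div_add {p q : ℝ} (hp : 0 ≤ p) (hq : 0 ≤ q)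
    (hpq : q = 0 → p = 0) : (√p - √q) ^ 2 ≤ p * Real.log (p / q) + (q - p) := by
  rcases hp.eq_or_lt with rfl | hp
  · simp [Real.sq_sqrt hq]
  have hq : 0 < q := hq.lt_of_ne' fun h => hp.ne' (hpq h)
  have hsp : 0 < √p := Real.sqrt_pos.2 hp
  have hsq : 0 < √q := Real.sqrt_pos.2 hq
  have hlog : 2 * (1 - √q / √p) ≤ Real.log (p / q) := by
    have hpq' : p / q = (√p / √q) ^ 2 := by
      rw [div_pow, Real.sq_sqrt hp.le, Real.sq_sqrt hq.le]
    have := Real.one_sub_inv_le_log_of_pos (div_pos hsp hsq)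
    rw [inv_div] at this
    rw [hpq', Real.log_pow]
    push_cast
    linarith
  have hdiv : p * (√q / √p) = √p * √q := by
    rw [mul_div_left_comm, Real.div_sqrt, mul_comm]
  calc (√p - √q) ^ 2 = p * (2 * (1 - √q / √p)) + (q - p) := by
        linear_combination Real.sq_sqrt hp.le + Real.sq_sqrt hq.le + 2 * hdiv
    _ ≤ p * Real.log (p / q) + (q - p) := by gcongr

namespace PMF

variable {α β : Type*}

lemma toReal_apply_le_one (p : PMF α) (a : α) : (p a).toReal ≤ 1 :=
  ENNReal.toReal_le_of_le_ofReal zero_le_one (by simpa using p.coe_le_one a)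

variable [Fintype α]

noncomputable def expect (p : PMF α) (f : α → ℝ) : ℝ :=
  ∑ a, (p a).toReal * f a

lemma sum_toReal (p : PMF α) : ∑ a, (p a).toReal = 1 := by
  have h := p.tsum_coe
  rw [tsum_fintype] at h
  rw [← ENNReal.toReal_sum fun a _ => p.apply_ne_top a, h, ENNReal.toReal_one]

lemma toReal_bind_apply (p : PMF α) (f : α → PMF β) (b : β) :
    (p.bind f b).toReal = ∑ a, (p a).toReal * (f a b).toReal := by
  rw [bind_apply, tsum_fintype, ENNReal.toReal_sum fun a _ =>
    ENNReal.mul_ne_top (p.apply_ne_top a) ((f a).apply_ne_top b)]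
  simp_rw [ENNReal.toReal_mul]

lemma expect_bind [Fintype β] (p : PMF α) (f : α → PMF β) (h : β → ℝ) :
    (p.bind f).expect h = p.expect fun a => (f a).expect h := by
  simp only [expect, toReal_bind_apply, sum_mul, mul_sum, mul_assoc]
  exact sum_comm

lemma expect_const (p : PMF α) (c : ℝ) : p.expect (fun _ => c) = c := by
  rw [expect, ← sum_mul, sum_toReal, one_mul]

lemma expect_sub (p : PMF α) (f g : α → ℝ) :
    p.expect (fun a => f a - g a) = p.expect f - p.expect g := by
  simp only [expect, mul_sub, sum_sub_distrib]

lemma abs_expect_le_expect {f g : α → ℝ} (p : PMF α) (hfg : ∀ a, |f a| ≤ g a) :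
    |p.expect f| ≤ p.expect g := by
  refine (abs_sum_le_sum_abs _ _).trans (sum_le_sum fun a _ => ?_)
  rw [abs_mul, ENNReal.abs_toReal]
  exact mul_le_mul_of_nonneg_left (hfg a) ENNReal.toReal_nonneg

lemma abs_expect_le {f : α → ℝ} {C : ℝ} (p : PMF α) (hf : ∀ a, |f a| ≤ C) :
    |p.expect f| ≤ C :=
  (p.abs_expect_le_expect hf).trans_eq (p.expect_const C)

lemma abs_expect_sub_expect_le {f : α → ℝ} {C : ℝ} (p q : PMF α) (hf : ∀ a, |f a| ≤ C) :
    |p.expect f - q.expect f| ≤ (∑ a, |(p a).toReal - (q a).toReal|) * C := by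
  rw [expect, expect, ← sum_sub_distrib, sum_mul]
  refine (abs_sum_le_sum_abs _ _).trans (sum_le_sum fun a _ => ?_)
  rw [← sub_mul, abs_mul]
  exact mul_le_mul_of_nonneg_left (hf a) (abs_nonneg _)

lemma sum_sq_sqrt_sub_sqrt_le_klDivPMF (p q : PMF α) (h : klDivPMF p q ≠ ⊤) :
    ∑ a, (√(p a).toReal - √(q a).toReal) ^ 2 ≤ (klDivPMF p q).toReal := by
  have hac : ∀ a, q a = 0 → p a = 0 := by
    by_contra hac
    exact h (if_neg hac)
  rw [klDivPMF, if_pos hac, ENNReal.toReal_ofReal']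
  refine le_max_of_le_left ?_
  calc ∑ a, (√(p a).toReal - √(q a).toReal) ^ 2
      ≤ ∑ a, ((p a).toReal * Real.log ((p a).toReal / (q a).toReal) +
          ((q a).toReal - (p a).toReal)) := by
        refine sum_le_sum fun a _ => sq_sqrt_sub_sqrt_le_mul_log_div_add
          ENNReal.toReal_nonneg ENNReal.toReal_nonneg fun hq => ?_
        rw [ENNReal.toReal_eq_zero_iff] at hq
        simp [hac a (hq.resolve_right (q.apply_ne_top a))]
    _ = ∑ a, (p a).toReal * Real.log ((p a).toReal / (q a).toReal) := by
        rw [sum_add_distrib, sum_sub_distrib, sum_toReal, sum_toReal, sub_self, add_zero]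

lemma sum_abs_sub_le_two_sqrt_klDivPMF (p q : PMF α) (h : klDivPMF p q ≠ ⊤) :
    ∑ a, |(p a).toReal - (q a).toReal| ≤ 2 * √(klDivPMF p q).toReal := by
  set x := fun a => √(p a).toReal
  set y := fun a => √(q a).toReal
  have hx : ∀ a, x a ^ 2 = (p a).toReal := fun a => Real.sq_sqrt ENNReal.toReal_nonneg
  have hy : ∀ a, y a ^ 2 = (q a).toReal := fun a => Real.sq_sqrt ENNReal.toReal_nonneg
  have hfac : ∀ a, |(p a).toReal - (q a).toReal| = |x a - y a| * (x a + y a) := by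
    intro a
    rw [← abs_of_nonneg (add_nonneg (Real.sqrt_nonneg _) (Real.sqrt_nonneg _)), ← abs_mul]
    congr 1
    linear_combination -hx a + hy a
  have hsum : ∑ a, (x a + y a) ^ 2 ≤ 2 ^ 2 := by
    calc ∑ a, (x a + y a) ^ 2 ≤ ∑ a, 2 * (x a ^ 2 + y a ^ 2) :=
          sum_le_sum fun a _ => by nlinarith [sq_nonneg (x a - y a)]
      _ = 2 ^ 2 := by
          simp only [hx, hy, ← mul_sum, sum_add_distrib, sum_toReal]
          norm_num
  calc ∑ a, |(p a).toReal - (q a).toReal| = ∑ a, |x a - y a| * (x a + y a) :=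
        sum_congr rfl fun a _ => hfac a
    _ ≤ √(∑ a, |x a - y a| ^ 2) * √(∑ a, (x a + y a) ^ 2) :=
        Real.sum_mul_le_sqrt_mul_sqrt _ _ _
    _ ≤ √(klDivPMF p q).toReal * √(2 ^ 2) := by
        simp only [sq_abs]
        gcongr
        exact sum_sq_sqrt_sub_sqrt_le_klDivPMF p q h
    _ = 2 * √(klDivPMF p q).toReal := by
        rw [Real.sqrt_sq zero_le_two, mul_comm]

end PMF

lemma sum_toReal_mul_sqrt_toReal_le {ι : Type*} [Fintype ι] {w x : ι → ℝ≥0∞} {ε : ℝ}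
    (hε : 0 ≤ ε) (hw : ∑ i, (w i).toReal = 1) (h : ∑ i, w i * x i ≤ ENNReal.ofReal ε) :
    ∑ i, (w i).toReal * √(x i).toReal ≤ √ε := by
  have hfin : ∀ i ∈ univ, w i * x i ≠ ⊤ :=
    ENNReal.sum_ne_top.1 (ne_top_of_le_ne_top ENNReal.ofReal_ne_top h)
  calc ∑ i, (w i).toReal * √(x i).toReal
      = ∑ i, √(w i).toReal * √((w i).toReal * (x i).toReal) := by
        refine sum_congr rfl fun i _ => ?_
        rw [Real.sqrt_mul ENNReal.toReal_nonneg, ← mul_assoc,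
          Real.mul_self_sqrt ENNReal.toReal_nonneg]
    _ ≤ √(∑ i, √(w i).toReal ^ 2) * √(∑ i, √((w i).toReal * (x i).toReal) ^ 2) :=
        Real.sum_mul_le_sqrt_mul_sqrt _ _ _
    _ = √(∑ i, w i * x i).toReal := by
        simp only [Real.sq_sqrt ENNReal.toReal_nonneg,
          Real.sq_sqrt (mul_nonneg ENNReal.toReal_nonneg ENNReal.toReal_nonneg), hw,
          Real.sqrt_one, one_mul, ENNReal.toReal_sum hfin, ENNReal.toReal_mul]
    _ ≤ √ε := Real.sqrt_le_sqrt (ENNReal.toReal_le_of_le_ofReal hε h)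

lemma sum_mul_expect_sum_abs_sub_le_two_sqrt {S A : Type*} [Fintype S] [Fintype A]
    {ρ : S → ℝ} (hρ0 : ∀ s, 0 ≤ ρ s) (hρ1 : ∑ s, ρ s = 1) (σ : S → PMF A)
    (P Q : S → A → PMF S) {ε : ℝ} (hε : 0 ≤ ε)
    (h : ∑ s, ENNReal.ofReal (ρ s) * ∑ a, σ s a * klDivPMF (P s a) (Q s a) ≤
      ENNReal.ofReal ε) :
    ∑ s, ρ s * (σ s).expect (fun a => ∑ s', |(P s a s').toReal - (Q s a s').toReal|) ≤
      2 * √ε := by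
  set w : S × A → ℝ≥0∞ := fun x => ENNReal.ofReal (ρ x.1) * σ x.1 x.2
  set kl : S × A → ℝ≥0∞ := fun x => klDivPMF (P x.1 x.2) (Q x.1 x.2)
  set tv : S × A → ℝ := fun x => ∑ s', |(P x.1 x.2 s').toReal - (Q x.1 x.2 s').toReal|
  have hw : ∀ x, (w x).toReal = ρ x.1 * (σ x.1 x.2).toReal := fun x => by
    simp only [w, ENNReal.toReal_mul, ENNReal.toReal_ofReal (hρ0 x.1)]
  have hw1 : ∑ x, (w x).toReal = 1 := by
    simp only [hw, Fintype.sum_prod_type, ← mul_sum, PMF.sum_toReal, mul_one, hρ1]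
  have hmodel : ∑ x, w x * kl x ≤ ENNReal.ofReal ε := by
    simpa only [w, kl, Fintype.sum_prod_type, mul_sum, mul_assoc] using h
  have hfin : ∀ x, w x * kl x ≠ ⊤ := fun x =>
    ENNReal.sum_ne_top.1 (ne_top_of_le_ne_top ENNReal.ofReal_ne_top hmodel) x (mem_univ x)
  have hpoint : ∀ x, (w x).toReal * tv x ≤ 2 * ((w x).toReal * √(kl x).toReal) := by
    intro x
    by_cases hw0 : w x = 0
    · simp [hw0]
    rw [mul_left_comm]
    refine mul_le_mul_of_nonneg_left (PMF.sum_abs_sub_le_two_sqrt_klDivPMF _ _ fun htop => ?_)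
      ENNReal.toReal_nonneg
    exact hfin x (by simp only [kl] at htop ⊢; rw [htop, ENNReal.mul_top hw0])
  calc ∑ s, ρ s * (σ s).expect (fun a => ∑ s', |(P s a s').toReal - (Q s a s').toReal|)
      = ∑ x, (w x).toReal * tv x := by
        simp only [hw, tv, PMF.expect, Fintype.sum_prod_type, mul_sum, mul_assoc]
    _ ≤ ∑ x, 2 * ((w x).toReal * √(kl x).toReal) := sum_le_sum fun x _ => hpoint x
    _ ≤ 2 * √ε := by
        rw [← mul_sum]
        gcongr
        exact sum_toReal_mul_sqrt_toReal_le hε hw1 hmodel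

lemma exists_bellman_fixedPoint {S : Type*} [Fintype S] (K : S → PMF S) (g : S → ℝ)
    {γ C : ℝ} (hγ0 : 0 ≤ γ) (hγ1 : γ < 1) (hg : ∀ s, |g s| ≤ C) :
    ∃ V : S → ℝ, (∀ s, V s = g s + γ * (K s).expect V) ∧ ∀ s, |V s| ≤ C / (1 - γ) := by
  set T : (S → ℝ) → S → ℝ := fun V s => g s + γ * (K s).expect V
  have hT : ContractingWith ⟨γ, hγ0⟩ T := by
    refine ⟨hγ1, LipschitzWith.of_dist_le_mul fun V W => ?_⟩
    refine (dist_pi_le_iff (mul_nonneg hγ0 dist_nonneg)).2 fun s => ?_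
    rw [Real.dist_eq, add_sub_add_left_eq_sub, ← mul_sub, ← PMF.expect_sub, abs_mul,
      abs_of_nonneg hγ0]
    exact mul_le_mul_of_nonneg_left ((K s).abs_expect_le fun s' => dist_le_pi_dist V W s') hγ0
  refine ⟨hT.fixedPoint T, fun s => (congrFun hT.fixedPoint_isFixedPt s).symm, fun s => ?_⟩
  have hC : 0 ≤ C := (abs_nonneg _).trans (hg s)
  calc |hT.fixedPoint T s| = dist ((0 : S → ℝ) s) (hT.fixedPoint T s) := by
        rw [Pi.zero_apply, Real.dist_eq, zero_sub, abs_neg]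
    _ ≤ dist 0 (hT.fixedPoint T) := dist_le_pi_dist _ _ s
    _ ≤ dist 0 (T 0) / (1 - γ) := hT.dist_fixedPoint_le 0
    _ ≤ C / (1 - γ) := by
        gcongr
        refine (dist_pi_le_iff hC).2 fun s => ?_
        simpa [T, PMF.expect, Real.dist_eq] using hg s

section Occupancy

variable {S A : Type*} {γ : ℝ}

lemma summable_pow_mul_stepDist (hγ0 : 0 ≤ γ) (hγ1 : γ < 1) (K : S → PMF S) (μ : PMF S)
    (s : S) : Summable fun t : ℕ => γ ^ t * (stepDist K μ t s).toReal :=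
  (summable_geometric_of_lt_one hγ0 hγ1).of_nonneg_of_le
    (fun t => mul_nonneg (pow_nonneg hγ0 t) ENNReal.toReal_nonneg)
    (fun t => mul_le_of_le_one_right (pow_nonneg hγ0 t) (PMF.toReal_apply_le_one _ _))

lemma polVisitDist_nonneg (hγ0 : 0 ≤ γ) (hγ1 : γ < 1) (μ : PMF S) (σ : S → PMF A)
    (P : S → A → PMF S) (s : S) : 0 ≤ polVisitDist γ μ σ P s :=
  mul_nonneg (sub_nonneg.2 hγ1.le)
    (tsum_nonneg fun t => mul_nonneg (pow_nonneg hγ0 t) ENNReal.toReal_nonneg)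

variable [Fintype S]

lemma tsum_pow_mul_expect_stepDist (hγ0 : 0 ≤ γ) (hγ1 : γ < 1) (μ : PMF S)
    (σ : S → PMF A) (P : S → A → PMF S) (h : S → ℝ) :
    ∑' t : ℕ, γ ^ t * (stepDist (polKernel σ P) μ t).expect h =
      (1 - γ)⁻¹ * ∑ s, polVisitDist γ μ σ P s * h s := by
  have hsum := summable_pow_mul_stepDist hγ0 hγ1 (polKernel σ P) μ
  calc ∑' t : ℕ, γ ^ t * (stepDist (polKernel σ P) μ t).expect h
      = ∑' t : ℕ, ∑ s, γ ^ t * (stepDist (polKernel σ P) μ t s).toReal * h s := by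
        simp only [PMF.expect, mul_sum, mul_assoc]
    _ = ∑ s, (∑' t : ℕ, γ ^ t * (stepDist (polKernel σ P) μ t s).toReal) * h s := by
        rw [Summable.tsum_finsetSum fun s _ => (hsum s).mul_right (h s)]
        simp only [tsum_mul_right]
    _ = (1 - γ)⁻¹ * ∑ s, polVisitDist γ μ σ P s * h s := by
        simp only [polVisitDist, mul_sum, ← mul_assoc,
          inv_mul_cancel₀ (sub_ne_zero.2 hγ1.ne'), one_mul]

lemma polValue_eq_sum_polVisitDist [Fintype A] (hγ0 : 0 ≤ γ) (hγ1 : γ < 1) (r : S → A → ℝ)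
    (μ : PMF S) (σ : S → PMF A) (P : S → A → PMF S) :
    polValue γ r μ σ P = (1 - γ)⁻¹ * ∑ s, polVisitDist γ μ σ P s * (σ s).expect (r s) :=
  tsum_pow_mul_expect_stepDist hγ0 hγ1 μ σ P _

lemma sum_polVisitDist_mul (hγ0 : 0 ≤ γ) (hγ1 : γ < 1) (μ : PMF S) (σ : S → PMF A)
    (P : S → A → PMF S) (h : S → ℝ) :
    ∑ s, polVisitDist γ μ σ P s * h s = (1 - γ) * μ.expect h +
      γ * ∑ s, polVisitDist γ μ σ P s * (polKernel σ P s).expect h := by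
  have hsum : Summable fun t => γ ^ t * (stepDist (polKernel σ P) μ t).expect h := by
    simp only [PMF.expect, mul_sum, ← mul_assoc]
    exact summable_sum fun s _ => (summable_pow_mul_stepDist hγ0 hγ1 _ μ s).mul_right (h s)
  have hshift : ∀ t, γ ^ (t + 1) * (stepDist (polKernel σ P) μ (t + 1)).expect h =
      γ * (γ ^ t * (stepDist (polKernel σ P) μ t).expect fun s => (polKernel σ P s).expect h) := by
    intro t
    rw [stepDist, PMF.expect_bind, pow_succ]
    ring
  have := hsum.tsum_eq_zero_add
  rw [tsum_congr hshift, tsum_mul_left, tsum_pow_mul_expect_stepDist hγ0 hγ1,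
    tsum_pow_mul_expect_stepDist hγ0 hγ1, pow_zero, one_mul] at this
  have h1γ : 1 - γ ≠ 0 := sub_ne_zero.2 hγ1.ne'
  field_simp at this
  exact this

lemma sum_polVisitDist (hγ0 : 0 ≤ γ) (hγ1 : γ < 1) (μ : PMF S) (σ : S → PMF A)
    (P : S → A → PMF S) : ∑ s, polVisitDist γ μ σ P s = 1 := by
  have h := sum_polVisitDist_mul hγ0 hγ1 μ σ P fun _ => 1
  simp only [PMF.expect_const, mul_one] at h
  have h' : (1 - γ) * (∑ s, polVisitDist γ μ σ P s - 1) = 0 := by linear_combination h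
  exact sub_eq_zero.1 ((mul_eq_zero.1 h').resolve_left (sub_ne_zero.2 hγ1.ne'))

end Occupancy

section Simulation

variable {S A : Type*} [Fintype S] [Fintype A] {γ : ℝ}

lemma one_sub_mul_expect_eq_of_bellman (hγ0 : 0 ≤ γ) (hγ1 : γ < 1) (r : S → A → ℝ)
    (μ : PMF S) (σ : S → PMF A) (P P' : S → A → PMF S) {V : S → ℝ}
    (hV : ∀ s, V s = (σ s).expect (r s) + γ * (polKernel σ P' s).expect V) :
    (1 - γ) * μ.expect V = (1 - γ) * polValue γ r μ σ P -
      γ * ∑ s, polVisitDist γ μ σ P s *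
        ((polKernel σ P s).expect V - (polKernel σ P' s).expect V) := by
  have hflow := sum_polVisitDist_mul hγ0 hγ1 μ σ P V
  have hbellman : ∑ s, polVisitDist γ μ σ P s * V s =
      ∑ s, polVisitDist γ μ σ P s * (σ s).expect (r s) +
        γ * ∑ s, polVisitDist γ μ σ P s * (polKernel σ P' s).expect V := by
    rw [mul_sum, ← sum_add_distrib]
    exact sum_congr rfl fun s _ => by rw [hV s]; ring
  rw [polValue_eq_sum_polVisitDist hγ0 hγ1, mul_inv_cancel_left₀ (sub_ne_zero.2 hγ1.ne')]
  simp only [mul_sub, sum_sub_distrib]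
  linarith

lemma one_sub_mul_polValue_sub_polValue (hγ0 : 0 ≤ γ) (hγ1 : γ < 1) (r : S → A → ℝ)
    (μ : PMF S) (σ : S → PMF A) (P P' : S → A → PMF S) {V : S → ℝ}
    (hV : ∀ s, V s = (σ s).expect (r s) + γ * (polKernel σ P' s).expect V) :
    (1 - γ) * (polValue γ r μ σ P - polValue γ r μ σ P') =
      γ * ∑ s, polVisitDist γ μ σ P s *
        ((polKernel σ P s).expect V - (polKernel σ P' s).expect V) := by
  have hP := one_sub_mul_expect_eq_of_bellman hγ0 hγ1 r μ σ P P' hV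
  have hP' := one_sub_mul_expect_eq_of_bellman hγ0 hγ1 r μ σ P' P' hV
  simp only [sub_self, mul_zero, sum_const_zero] at hP'
  linarith

theorem abs_polValue_sub_polValue_le (hγ0 : 0 ≤ γ) (hγ1 : γ < 1) {Rmax : ℝ} (hR : 0 ≤ Rmax)
    {r : S → A → ℝ} (hr : ∀ s a, |r s a| ≤ Rmax) (μ : PMF S) (σ : S → PMF A)
    (P P' : S → A → PMF S) {ε : ℝ} (hε : 0 ≤ ε)
    (hModel : ∑ s, ENNReal.ofReal (polVisitDist γ μ σ P s) *
      ∑ a, σ s a * klDivPMF (P s a) (P' s a) ≤ ENNReal.ofReal ε) :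
    |polValue γ r μ σ P - polValue γ r μ σ P'| ≤ 2 * γ * Rmax * √ε / (1 - γ) ^ 2 := by
  have h1γ : 0 < 1 - γ := sub_pos.2 hγ1
  obtain ⟨V, hV, hVle⟩ := exists_bellman_fixedPoint (polKernel σ P') _ hγ0 hγ1
    fun s => (σ s).abs_expect_le (hr s)
  set ρ := polVisitDist γ μ σ P
  set tv : S → A → ℝ := fun s a => ∑ s', |(P s a s').toReal - (P' s a s').toReal|
  have hstep : ∀ s, |(polKernel σ P s).expect V - (polKernel σ P' s).expect V| ≤
      (σ s).expect (tv s) * (Rmax / (1 - γ)) := by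
    intro s
    simp only [polKernel, PMF.expect_bind, ← PMF.expect_sub]
    refine ((σ s).abs_expect_le_expect fun a => PMF.abs_expect_sub_expect_le _ _ hVle).trans_eq ?_
    simp only [tv, PMF.expect, sum_mul, mul_assoc]
  have hgap : (1 - γ) * |polValue γ r μ σ P - polValue γ r μ σ P'| ≤
      γ * (Rmax / (1 - γ) * (2 * √ε)) := by
    rw [← abs_of_pos h1γ, ← abs_mul, one_sub_mul_polValue_sub_polValue hγ0 hγ1 r μ σ P P' hV,
      abs_mul, abs_of_nonneg hγ0, abs_of_pos h1γ]
    gcongr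
    calc |∑ s, ρ s * ((polKernel σ P s).expect V - (polKernel σ P' s).expect V)|
        ≤ ∑ s, ρ s * ((σ s).expect (tv s) * (Rmax / (1 - γ))) := by
          refine (abs_sum_le_sum_abs _ _).trans (sum_le_sum fun s _ => ?_)
          rw [abs_mul, abs_of_nonneg (polVisitDist_nonneg hγ0 hγ1 μ σ P s)]
          exact mul_le_mul_of_nonneg_left (hstep s) (polVisitDist_nonneg hγ0 hγ1 μ σ P s)
      _ = Rmax / (1 - γ) * ∑ s, ρ s * (σ s).expect (tv s) := by
          rw [mul_sum]
          exact sum_congr rfl fun s _ => by ring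
      _ ≤ Rmax / (1 - γ) * (2 * √ε) := by
          gcongr
          exact sum_mul_expect_sum_abs_sub_le_two_sqrt (polVisitDist_nonneg hγ0 hγ1 μ σ P)
            (sum_polVisitDist hγ0 hγ1 μ σ P) σ P P' hε hModel
  rw [le_div_iff₀ (by positivity)]
  calc |polValue γ r μ σ P - polValue γ r μ σ P'| * (1 - γ) ^ 2
      = (1 - γ) * ((1 - γ) * |polValue γ r μ σ P - polValue γ r μ σ P'|) := by ring
    _ ≤ (1 - γ) * (γ * (Rmax / (1 - γ) * (2 * √ε))) := by gcongr
    _ = 2 * γ * Rmax * √ε := by field_simp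

end Simulation

theorem meta_model_based_rl_performance_bound_general {S A : Type*}
    [Fintype S] [Fintype A]
    (γ : ℝ) (hγ0 : 0 ≤ γ) (hγ1 : γ < 1)
    (Rmax : ℝ) (hR : 0 ≤ Rmax) (r : S → A → ℝ) (hr : ∀ s a, |r s a| ≤ Rmax)
    (μ : PMF S) (Pw Pm : S → A → PMF S) (π πStar : S → PMF A)
    (ε επ : ℝ) (hε : 0 ≤ ε)
    (hModelπ : ∑ s, ENNReal.ofReal (polVisitDist γ μ π Pw s) *
      ∑ a, (π s a) * klDivPMF (Pw s a) (Pm s a) ≤ ENNReal.ofReal ε)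
    (hModelπStar : ∑ s, ENNReal.ofReal (polVisitDist γ μ πStar Pw s) *
      ∑ a, (πStar s a) * klDivPMF (Pw s a) (Pm s a) ≤ ENNReal.ofReal ε)
    (hOpt : ∀ π' : S → PMF A, polValue γ r μ π Pm ≥ polValue γ r μ π' Pm - επ) :
    polValue γ r μ πStar Pw - polValue γ r μ π Pw ≤
      επ + 4 * γ * Rmax * Real.sqrt ε / (1 - γ) ^ 2 := by
  have hStar := abs_le.1 <|
    abs_polValue_sub_polValue_le hγ0 hγ1 hR hr μ πStar Pw Pm hε hModelπStar
  have hπ := abs_le.1 <| abs_polValue_sub_polValue_le hγ0 hγ1 hR hr μ π Pw Pm hε hModelπ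
  have hsplit : 4 * γ * Rmax * √ε / (1 - γ) ^ 2 = 2 * (2 * γ * Rmax * √ε / (1 - γ) ^ 2) := by
    ring
  linarith [hStar.2, hπ.1, hOpt πStar]

/-- Theorem 1: recommendation performance bound of meta-level model-based RL.
If (i) the modeling error of the learned model `Pm` w.r.t. the true model `Pw` under the
visitation distribution of `π` is at most `ε`, (ii) likewise under the visitation
distribution of `π⋆`, and (iii) `π` is `ε_π`-optimal in the learned model `Pm`, then
`J(π⋆, P_w) − J(π, P_w) ≤ ε_π + 4·γ·R_max·√ε / (1−γ)²`. -/
theorem meta_model_based_rl_performance_bound {S A : Type*}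
    [Fintype S] [Nonempty S] [Fintype A] [Nonempty A]
    (γ : ℝ) (hγ0 : 0 ≤ γ) (hγ1 : γ < 1)
    (Rmax : ℝ) (hR : 0 ≤ Rmax) (r : S → A → ℝ) (hr : ∀ s a, |r s a| ≤ Rmax)
    (μ : PMF S) (Pw Pm : S → A → PMF S) (π πStar : S → PMF A)
    (ε επ : ℝ) (hε : 0 ≤ ε) (hεπ : 0 ≤ επ)
    (hModelπ : ∑ s, ENNReal.ofReal (polVisitDist γ μ π Pw s) *
      ∑ a, (π s a) * klDivPMF (Pw s a) (Pm s a) ≤ ENNReal.ofReal ε)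
    (hModelπStar : ∑ s, ENNReal.ofReal (polVisitDist γ μ πStar Pw s) *
      ∑ a, (πStar s a) * klDivPMF (Pw s a) (Pm s a) ≤ ENNReal.ofReal ε)
    (hOpt : ∀ π' : S → PMF A, polValue γ r μ π Pm ≥ polValue γ r μ π' Pm - επ) :
    polValue γ r μ πStar Pw - polValue γ r μ π Pw ≤
      επ + 4 * γ * Rmax * Real.sqrt ε / (1 - γ) ^ 2 :=
  meta_model_based_rl_performance_bound_general γ hγ0 hγ1 Rmax hR r hr μ Pw Pm π πStar ε επ hε
    hModelπ hModelπStar hOpt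
end

section
/- Let P and Q be probability measures on a measurable space Ω, and let D : Ω → ℝ be measurable with 0 < D(ω) < 1 for all ω, such that log ∘ D is P-integrable and log ∘ (1 − D) is Q-integrable. Then ∫ log(D(ω)) dP(ω) + ∫ log(1 − D(ω)) dQ(ω) ≤ 2·JS(P, Q) − log 4, where JS(P, Q) = (1/2)·KL(P ‖ (1/2)(P+Q)) + (1/2)·KL(Q ‖ (1/2)(P+Q)). -/
open MeasureTheory
open scoped ENNReal Classical

/-- Kullback–Leibler divergence between measures: `∫ log(dP/dQ) dP` when `P ≪ Q` and the
log-likelihood ratio is `P`-integrable, and `∞` otherwise. -/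
noncomputable def klDivM {Ω : Type*} [MeasurableSpace Ω] (P Q : Measure Ω) : ℝ≥0∞ :=
  if P ≪ Q ∧ Integrable (llr P Q) P then ENNReal.ofReal (∫ ω, llr P Q ω ∂P) else ⊤

/-- Jensen–Shannon divergence
`JS(P, Q) = (1/2)·KL(P ‖ (1/2)(P+Q)) + (1/2)·KL(Q ‖ (1/2)(P+Q))`. -/
noncomputable def jsDiv {Ω : Type*} [MeasurableSpace Ω] (P Q : Measure Ω) : ℝ≥0∞ :=
  2⁻¹ * klDivM P ((2 : ℝ≥0∞)⁻¹ • (P + Q)) + 2⁻¹ * klDivM Q ((2 : ℝ≥0∞)⁻¹ • (P + Q))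

lemma abs_mul_log_le_two {t : ℝ} (h0 : 0 ≤ t) (h2 : t ≤ 2) : |t * Real.log t| ≤ 2 := by
  rcases le_or_gt t 1 with h1 | h1
  · rcases eq_or_lt_of_le h0 with h | h
    · simp [← h]
    · have := Real.abs_log_mul_self_lt t h h1
      rw [mul_comm] at this
      linarith [this]
  · have hlt : Real.log t ≤ 1 := by
      have := Real.log_le_sub_one_of_pos (by linarith : (0:ℝ) < t)
      linarith
    have hl0 : 0 ≤ Real.log t := Real.log_nonneg h1.le
    rw [abs_of_nonneg (by positivity)]
    nlinarith

lemma integrable_llr_of_rnDeriv_le {Ω : Type*} [MeasurableSpace Ω]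
    (P M : Measure Ω) [IsFiniteMeasure P] [IsFiniteMeasure M] (hPM : P ≪ M)
    (h2 : P.rnDeriv M ≤ᵐ[M] 2) : Integrable (llr P M) P := by
  rw [← integrable_rnDeriv_smul_iff hPM]
  refine Integrable.mono' (integrable_const (2:ℝ)) ?_ ?_
  · exact ((Measure.measurable_rnDeriv P M).ennreal_toReal.smul (measurable_llr P M)).aestronglyMeasurable
  · filter_upwards [h2] with ω hω
    have ht : (P.rnDeriv M ω).toReal ≤ 2 := by
      have := ENNReal.toReal_mono (by simp) hω
      simpa using this
    have := abs_mul_log_le_two (t := (P.rnDeriv M ω).toReal) ENNReal.toReal_nonneg ht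
    rw [abs_mul, abs_of_nonneg (ENNReal.toReal_nonneg)] at this
    simpa [llr, Real.norm_eq_abs, abs_mul, abs_of_nonneg (ENNReal.toReal_nonneg)] using this

lemma ofReal_max_zero (a : ℝ) : ENNReal.ofReal (max a 0) = ENNReal.ofReal a := by
  rcases le_total 0 a with h | h
  · rw [max_eq_left h]
  · rw [max_eq_right h, ENNReal.ofReal_of_nonpos h, ENNReal.ofReal_zero]

lemma key_bound {Ω : Type*} [MeasurableSpace Ω] (P M : Measure Ω)
    [IsProbabilityMeasure P] [IsProbabilityMeasure M] (hPM : P ≪ M)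
    (E : Ω → ℝ) (hE : Measurable E) (hE01 : ∀ ω, 0 < E ω ∧ E ω < 1)
    (hint : Integrable (fun ω => Real.log (E ω)) P) (hllr : Integrable (llr P M) P) :
    ENNReal.ofReal ((∫ ω, Real.log (E ω) ∂P) + Real.log 2 - (∫ ω, llr P M ω ∂P) + 1)
      ≤ ∫⁻ ω, ENNReal.ofReal (2 * E ω) ∂M := by
  have hfi1 : Integrable (fun ω => Real.log (E ω) + Real.log 2) P :=
    hint.add (integrable_const _)
  have hfi2 : Integrable (fun ω => Real.log (E ω) + Real.log 2 - llr P M ω) P :=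
    hfi1.sub hllr
  have hfP_int : Integrable (fun ω => Real.log (E ω) + Real.log 2 - llr P M ω + 1) P :=
    hfi2.add (integrable_const 1)
  have hint_eq : (∫ ω, (Real.log (E ω) + Real.log 2 - llr P M ω + 1) ∂P)
      = (∫ ω, Real.log (E ω) ∂P) + Real.log 2 - (∫ ω, llr P M ω ∂P) + 1 := by
    rw [integral_add hfi2 (integrable_const 1), integral_sub hfi1 hllr,
      integral_add hint (integrable_const _)]
    simp
  rw [← hint_eq]
  calc ENNReal.ofReal (∫ ω, (Real.log (E ω) + Real.log 2 - llr P M ω + 1) ∂P)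
      ≤ ENNReal.ofReal (∫ ω, max (Real.log (E ω) + Real.log 2 - llr P M ω + 1) 0 ∂P) := by
        exact ENNReal.ofReal_le_ofReal
          (integral_mono hfP_int hfP_int.pos_part fun ω => le_max_left _ _)
    _ = ∫⁻ ω, ENNReal.ofReal (max (Real.log (E ω) + Real.log 2 - llr P M ω + 1) 0) ∂P :=
        ofReal_integral_eq_lintegral_ofReal hfP_int.pos_part
          (Filter.Eventually.of_forall fun ω => le_max_right _ _)
    _ = ∫⁻ ω, ENNReal.ofReal (Real.log (E ω) + Real.log 2 - llr P M ω + 1) ∂P := by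
        simp_rw [ofReal_max_zero]
    _ ≤ ∫⁻ ω, ENNReal.ofReal (2 * E ω) / P.rnDeriv M ω ∂P := by
        refine lintegral_mono_ae ?_
        filter_upwards [Measure.rnDeriv_pos hPM, hPM.ae_le (Measure.rnDeriv_lt_top P M)]
          with ω hpos hlt
        have ht : 0 < (P.rnDeriv M ω).toReal := ENNReal.toReal_pos hpos.ne' hlt.ne
        have hE0 := (hE01 ω).1
        have h1 : Real.log (2 * E ω / (P.rnDeriv M ω).toReal)
            ≤ 2 * E ω / (P.rnDeriv M ω).toReal - 1 :=
          Real.log_le_sub_one_of_pos (by positivity)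
        rw [Real.log_div (by positivity) ht.ne', Real.log_mul two_ne_zero hE0.ne'] at h1
        calc ENNReal.ofReal (Real.log (E ω) + Real.log 2 - llr P M ω + 1)
            ≤ ENNReal.ofReal (2 * E ω / (P.rnDeriv M ω).toReal) := by
              refine ENNReal.ofReal_le_ofReal ?_
              simp only [llr]
              linarith
          _ = ENNReal.ofReal (2 * E ω) / ENNReal.ofReal (P.rnDeriv M ω).toReal :=
              ENNReal.ofReal_div_of_pos ht
          _ = ENNReal.ofReal (2 * E ω) / P.rnDeriv M ω := by
              rw [ENNReal.ofReal_toReal hlt.ne]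
    _ ≤ ∫⁻ ω, ENNReal.ofReal (2 * E ω) ∂M := by
        set g : Ω → ℝ≥0∞ := fun ω => ENNReal.ofReal (2 * E ω) / P.rnDeriv M ω with hg
        have hgm : Measurable g :=
          ((hE.const_mul 2).ennreal_ofReal).div (Measure.measurable_rnDeriv P M)
        have hrw : (∫⁻ ω, g ω ∂P) = ∫⁻ ω, (P.rnDeriv M * g) ω ∂M := by
          conv_lhs => rw [← Measure.withDensity_rnDeriv_eq P M hPM]
          exact lintegral_withDensity_eq_lintegral_mul M (Measure.measurable_rnDeriv P M) hgm
        rw [hrw]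
        refine lintegral_mono fun ω => ?_
        show P.rnDeriv M ω * (ENNReal.ofReal (2 * E ω) / P.rnDeriv M ω)
            ≤ ENNReal.ofReal (2 * E ω)
        rw [div_eq_mul_inv]
        calc P.rnDeriv M ω * (ENNReal.ofReal (2 * E ω) * (P.rnDeriv M ω)⁻¹)
            = ENNReal.ofReal (2 * E ω) * (P.rnDeriv M ω * (P.rnDeriv M ω)⁻¹) := by ring
          _ ≤ ENNReal.ofReal (2 * E ω) * 1 :=
              mul_le_mul_right (ENNReal.mul_inv_le_one _) _
          _ = ENNReal.ofReal (2 * E ω) := mul_one _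

lemma le_toReal_ofReal (a : ℝ) : a ≤ (ENNReal.ofReal a).toReal := by
  rcases le_total 0 a with h | h
  · rw [ENNReal.toReal_ofReal h]
  · exact h.trans ENNReal.toReal_nonneg

/-- Variational upper bound on the GAN discriminator objective by the Jensen–Shannon
divergence: `∫ log(D) dP + ∫ log(1 − D) dQ ≤ 2·JS(P, Q) − log 4`. -/
theorem gan_discriminator_js_bound {Ω : Type*} [MeasurableSpace Ω]
    (P Q : Measure Ω) [IsProbabilityMeasure P] [IsProbabilityMeasure Q]
    (D : Ω → ℝ) (hD : Measurable D) (hD01 : ∀ ω, 0 < D ω ∧ D ω < 1)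
    (hPint : Integrable (fun ω => Real.log (D ω)) P)
    (hQint : Integrable (fun ω => Real.log (1 - D ω)) Q) :
    (∫ ω, Real.log (D ω) ∂P) + (∫ ω, Real.log (1 - D ω) ∂Q) ≤
      2 * (jsDiv P Q).toReal - Real.log 4 := by
  set M : Measure Ω := (2 : ℝ≥0∞)⁻¹ • (P + Q) with hM
  haveI : IsProbabilityMeasure M := by
    constructor
    rw [hM]
    simp only [Measure.smul_apply, Measure.add_apply, measure_univ, smul_eq_mul]
    rw [one_add_one_eq_two, ENNReal.inv_mul_cancel (by norm_num) (by norm_num)]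
  have hMPQ : M ≪ P + Q := by
    refine Measure.AbsolutelyContinuous.mk fun s hs h0 => ?_
    rw [hM]
    simp only [Measure.smul_apply, smul_eq_mul, h0, mul_zero]
  have hPM : P ≪ M := by
    refine Measure.AbsolutelyContinuous.mk fun s hs h0 => ?_
    rw [hM] at h0
    simp only [Measure.smul_apply, Measure.add_apply, smul_eq_mul] at h0
    rcases mul_eq_zero.mp h0 with h | h
    · exact absurd h (by simp)
    · exact (add_eq_zero.mp h).1
  have hQM : Q ≪ M := by
    refine Measure.AbsolutelyContinuous.mk fun s hs h0 => ?_
    rw [hM] at h0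
    simp only [Measure.smul_apply, Measure.add_apply, smul_eq_mul] at h0
    rcases mul_eq_zero.mp h0 with h | h
    · exact absurd h (by simp)
    · exact (add_eq_zero.mp h).2
  have h2P : P.rnDeriv M ≤ᵐ[M] 2 := by
    have h1 : P.rnDeriv M =ᵐ[P + Q] ((2 : ℝ≥0∞)⁻¹)⁻¹ • P.rnDeriv (P + Q) := by
      rw [hM]
      exact Measure.rnDeriv_smul_right_of_ne_top P (P + Q) (by norm_num) (by norm_num)
    have h2 : P.rnDeriv (P + Q) ≤ᵐ[P + Q] 1 :=
      Measure.rnDeriv_le_one_of_le (Measure.le_add_right le_rfl)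
    filter_upwards [hMPQ.ae_le h1, hMPQ.ae_le h2] with ω he hle
    calc P.rnDeriv M ω = ((2 : ℝ≥0∞)⁻¹)⁻¹ * P.rnDeriv (P + Q) ω := he
      _ ≤ ((2 : ℝ≥0∞)⁻¹)⁻¹ * 1 := mul_le_mul_right hle _
      _ = 2 := by rw [inv_inv, mul_one]
  have h2Q : Q.rnDeriv M ≤ᵐ[M] 2 := by
    have h1 : Q.rnDeriv M =ᵐ[P + Q] ((2 : ℝ≥0∞)⁻¹)⁻¹ • Q.rnDeriv (P + Q) := by
      rw [hM]
      exact Measure.rnDeriv_smul_right_of_ne_top Q (P + Q) (by norm_num) (by norm_num)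
    have h2 : Q.rnDeriv (P + Q) ≤ᵐ[P + Q] 1 :=
      Measure.rnDeriv_le_one_of_le (Measure.le_add_left le_rfl)
    filter_upwards [hMPQ.ae_le h1, hMPQ.ae_le h2] with ω he hle
    calc Q.rnDeriv M ω = ((2 : ℝ≥0∞)⁻¹)⁻¹ * Q.rnDeriv (P + Q) ω := he
      _ ≤ ((2 : ℝ≥0∞)⁻¹)⁻¹ * 1 := mul_le_mul_right hle _
      _ = 2 := by rw [inv_inv, mul_one]
  have hllrP : Integrable (llr P M) P := integrable_llr_of_rnDeriv_le P M hPM h2P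
  have hllrQ : Integrable (llr Q M) Q := integrable_llr_of_rnDeriv_le Q M hQM h2Q
  set A := ∫ ω, Real.log (D ω) ∂P with hA
  set B := ∫ ω, Real.log (1 - D ω) ∂Q with hB
  set KP := ∫ ω, llr P M ω ∂P with hKPdef
  set KQ := ∫ ω, llr Q M ω ∂Q with hKQdef
  have hD01' : ∀ ω, 0 < 1 - D ω ∧ 1 - D ω < 1 := fun ω =>
    ⟨by linarith [(hD01 ω).2], by linarith [(hD01 ω).1]⟩
  have hbP := key_bound P M hPM D hD hD01 hPint hllrP
  have hbQ := key_bound Q M hQM (fun ω => 1 - D ω) (measurable_const.sub hD) hD01' hQint hllrQ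
  set SP := ∫⁻ ω, ENNReal.ofReal (2 * D ω) ∂M with hSP
  set SQ := ∫⁻ ω, ENNReal.ofReal (2 * (1 - D ω)) ∂M with hSQ
  have hsum : SP + SQ = 2 := by
    rw [hSP, hSQ, ← lintegral_add_left ((hD.const_mul 2).ennreal_ofReal)]
    have hpt : ∀ ω, ENNReal.ofReal (2 * D ω) + ENNReal.ofReal (2 * (1 - D ω)) = 2 := by
      intro ω
      rw [← ENNReal.ofReal_add (by nlinarith [(hD01 ω).1]) (by nlinarith [(hD01 ω).2])]
      rw [show 2 * D ω + 2 * (1 - D ω) = 2 by ring, ENNReal.ofReal_ofNat]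
    simp_rw [hpt]
    rw [lintegral_const, measure_univ, mul_one]
  have hSPne : SP ≠ ⊤ :=
    ((hsum ▸ le_self_add : SP ≤ 2).trans_lt (lt_top_iff_ne_top.mpr (by norm_num))).ne
  have hSQne : SQ ≠ ⊤ :=
    ((hsum ▸ le_add_self : SQ ≤ 2).trans_lt (lt_top_iff_ne_top.mpr (by norm_num))).ne
  have haP : A + Real.log 2 - KP + 1 ≤ SP.toReal :=
    (le_toReal_ofReal _).trans (ENNReal.toReal_mono hSPne hbP)
  have haQ : B + Real.log 2 - KQ + 1 ≤ SQ.toReal :=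
    (le_toReal_ofReal _).trans (ENNReal.toReal_mono hSQne hbQ)
  have hsum_real : SP.toReal + SQ.toReal ≤ 2 := by
    rw [← ENNReal.toReal_add hSPne hSQne, hsum]
    norm_num
  have hmain : A + B ≤ KP + KQ - 2 * Real.log 2 := by linarith
  have hKP : klDivM P M = ENNReal.ofReal KP := by
    rw [klDivM, if_pos ⟨hPM, hllrP⟩]
  have hKQ : klDivM Q M = ENNReal.ofReal KQ := by
    rw [klDivM, if_pos ⟨hQM, hllrQ⟩]
  have hjs : 2 * (jsDiv P Q).toReal
      = (ENNReal.ofReal KP).toReal + (ENNReal.ofReal KQ).toReal := by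
    rw [jsDiv, ← hM, hKP, hKQ,
      ENNReal.toReal_add (ENNReal.mul_ne_top (by norm_num) ENNReal.ofReal_ne_top)
        (ENNReal.mul_ne_top (by norm_num) ENNReal.ofReal_ne_top),
      ENNReal.toReal_mul, ENNReal.toReal_mul]
    simp only [ENNReal.toReal_inv, ENNReal.toReal_ofNat]
    ring
  have hlog4 : Real.log 4 = 2 * Real.log 2 := by
    rw [show (4 : ℝ) = 2 ^ 2 by norm_num, Real.log_pow]
    push_cast
    ring
  have h1 : KP ≤ (ENNReal.ofReal KP).toReal := le_toReal_ofReal _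
  have h2 : KQ ≤ (ENNReal.ofReal KQ).toReal := le_toReal_ofReal _
  rw [hjs, hlog4]
  linarith
end

section
/- Let P and Q be probability measures on a measurable space Ω, and let T : Ω → ℝ be measurable such that ω ↦ sp(−T(ω)) is P-integrable and ω ↦ sp(T(ω)) is Q-integrable, where sp(z) = log(1 + exp z) is the softplus function. Then ∫ (− sp(−T(ω))) dP(ω) − ∫ sp(T(ω)) dQ(ω) ≤ 2·JS(P, Q) − log 4, where JS(P, Q) = (1/2)·KL(P ‖ (1/2)(P+Q)) + (1/2)·KL(Q ‖ (1/2)(P+Q)). -/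
open MeasureTheory
open scoped ENNReal Classical

/-- The softplus function `sp(z) = log(1 + exp z)`. -/
noncomputable def softplus (z : ℝ) : ℝ := Real.log (1 + Real.exp z)

/-!
Let `M = (P + Q)/2`, `f = dP/dM` and `g = dQ/dM`, so that `f + g = 2` `M`-a.e. In particular
`f, g ≤ 2`, so both KL terms of `JS(P, Q)` are finite and
`2·JS(P, Q) = ∫ f log f dM + ∫ g log g dM`. Changing measure to `M`, the left-hand side becomes
`∫ (f·(−sp(−T)) − g·sp(T)) dM`, and the integrand is bounded pointwise by
`f log f + g log g − log 4`: this is the Fenchel–Young inequality `a x ≤ a log a + eˣ − a`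
applied at `x = log 2 − sp(−T)` and `x = log 2 − sp(T)`, together with
`e^{−sp(−t)} + e^{−sp(t)} = 1`.
-/

open Real

lemma mul_le_mul_log_add_exp_sub {a : ℝ} (ha : 0 ≤ a) (x : ℝ) :
    a * x ≤ a * log a + exp x - a := by
  rcases ha.eq_or_lt with rfl | ha
  · simpa using (exp_pos x).le
  have h := add_one_le_exp (x - log a)
  rw [exp_sub, exp_log ha, le_div_iff₀ ha] at h
  linarith

lemma exp_neg_softplus (z : ℝ) : exp (-softplus z) = (1 + exp z)⁻¹ := by
  rw [softplus, exp_neg, exp_log (by positivity)]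

lemma exp_neg_softplus_neg_add_exp_neg_softplus (t : ℝ) :
    exp (-softplus (-t)) + exp (-softplus t) = 1 := by
  rw [exp_neg_softplus, exp_neg_softplus, exp_neg]
  field_simp
  ring

lemma mul_neg_softplus_neg_sub_mul_softplus_le {a b : ℝ} (ha : 0 ≤ a) (hb : 0 ≤ b)
    (hab : a + b = 2) (t : ℝ) :
    a * -softplus (-t) - b * softplus t ≤ a * log a + b * log b - log 4 := by
  have hP := mul_le_mul_log_add_exp_sub ha (log 2 + -softplus (-t))
  have hQ := mul_le_mul_log_add_exp_sub hb (log 2 + -softplus t)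
  rw [exp_add, exp_log two_pos] at hP hQ
  have hlog4 : log 4 = (a + b) * log 2 := by
    rw [hab, show (4 : ℝ) = 2 ^ 2 by norm_num, log_pow, Nat.cast_ofNat]
  linarith [exp_neg_softplus_neg_add_exp_neg_softplus t]

lemma abs_mul_log_le_one_add_sq (x : ℝ) : |x * log x| ≤ 1 + x ^ 2 := by
  rw [← log_abs, abs_mul, ← abs_abs x, ← abs_mul, abs_abs, ← sq_abs x]
  rcases (abs_nonneg x).eq_or_lt with h | h
  · simp [← h]
  rw [abs_le]
  constructor
  · nlinarith [one_sub_inv_le_log_of_pos h, mul_inv_cancel₀ h.ne']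
  · nlinarith [log_le_sub_one_of_pos h]

section Mixture

variable {Ω : Type*} [MeasurableSpace Ω]

lemma integrable_mul_log_of_abs_le {μ : Measure Ω} [IsFiniteMeasure μ] {f : Ω → ℝ} {c : ℝ}
    (hf : AEStronglyMeasurable f μ) (hc : ∀ᵐ x ∂μ, |f x| ≤ c) :
    Integrable (fun x ↦ f x * log (f x)) μ := by
  refine (integrable_const (1 + c ^ 2)).mono' (continuous_mul_log.comp_aestronglyMeasurable hf) ?_
  filter_upwards [hc] with x hx
  calc ‖f x * log (f x)‖ ≤ 1 + f x ^ 2 := abs_mul_log_le_one_add_sq (f x)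
    _ ≤ 1 + c ^ 2 := by linarith [sq_le_sq' (neg_le_of_abs_le hx) (le_of_abs_le hx)]

noncomputable def integralMulLogRnDeriv (P M : Measure Ω) : ℝ :=
  ∫ x, (P.rnDeriv M x).toReal * log (P.rnDeriv M x).toReal ∂M

variable (P Q : Measure Ω)

noncomputable def mixture : Measure Ω := (2 : ℝ≥0∞)⁻¹ • (P + Q)

lemma mixture_comm : mixture P Q = mixture Q P := by
  rw [mixture, add_comm, mixture]

lemma two_smul_mixture : (2 : ℝ≥0∞) • mixture P Q = P + Q := by
  rw [mixture, smul_smul, ENNReal.mul_inv_cancel two_ne_zero ENNReal.ofNat_ne_top, one_smul]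

instance [IsFiniteMeasure P] [IsFiniteMeasure Q] : IsFiniteMeasure (mixture P Q) :=
  ⟨by simp [mixture, ENNReal.mul_lt_top, measure_lt_top]⟩

instance [IsProbabilityMeasure P] [IsProbabilityMeasure Q] : IsProbabilityMeasure (mixture P Q) :=
  ⟨by simp [mixture, ENNReal.inv_two_add_inv_two]⟩

lemma absolutelyContinuous_mixture_left : P ≪ mixture P Q :=
  (Measure.AbsolutelyContinuous.rfl.add_right Q).trans
    (Measure.absolutelyContinuous_smul (by simp))

variable [IsFiniteMeasure P] [IsFiniteMeasure Q]

lemma rnDeriv_mixture_add_rnDeriv_mixture :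
    ∀ᵐ x ∂mixture P Q, P.rnDeriv (mixture P Q) x + Q.rnDeriv (mixture P Q) x = 2 := by
  have hsmul := Measure.rnDeriv_smul_left_of_ne_top' (mixture P Q) (mixture P Q)
    (ENNReal.ofNat_ne_top (n := 2))
  rw [two_smul_mixture] at hsmul
  filter_upwards [Measure.rnDeriv_add P Q (mixture P Q), hsmul,
    Measure.rnDeriv_self (mixture P Q)] with x hadd hsmul hself
  simp_all

lemma toReal_rnDeriv_mixture_add_toReal_rnDeriv_mixture :
    ∀ᵐ x ∂mixture P Q,
      (P.rnDeriv (mixture P Q) x).toReal + (Q.rnDeriv (mixture P Q) x).toReal = 2 := by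
  filter_upwards [rnDeriv_mixture_add_rnDeriv_mixture P Q] with x hx
  have hfin := ENNReal.add_ne_top.1 (hx ▸ ENNReal.ofNat_ne_top)
  rw [← ENNReal.toReal_add hfin.1 hfin.2, hx, ENNReal.toReal_ofNat]

lemma integrable_mul_log_toReal_rnDeriv_mixture :
    Integrable (fun x ↦ (P.rnDeriv (mixture P Q) x).toReal *
      log (P.rnDeriv (mixture P Q) x).toReal) (mixture P Q) := by
  refine integrable_mul_log_of_abs_le (c := 2)
    (Measure.measurable_rnDeriv _ _).ennreal_toReal.aestronglyMeasurable ?_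
  filter_upwards [toReal_rnDeriv_mixture_add_toReal_rnDeriv_mixture P Q] with x hx
  rw [abs_of_nonneg ENNReal.toReal_nonneg]
  linarith [(Q.rnDeriv (mixture P Q) x).toReal_nonneg]

lemma klDivM_mixture_left :
    klDivM P (mixture P Q) = ENNReal.ofReal (integralMulLogRnDeriv P (mixture P Q)) := by
  have hac := absolutelyContinuous_mixture_left P Q
  have hint := integrable_mul_log_toReal_rnDeriv_mixture P Q
  rw [klDivM, if_pos ⟨hac, (integrable_toReal_rnDeriv_mul_iff hac).1 hint⟩,
    ← integral_toReal_rnDeriv_mul hac]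
  rfl

lemma integral_mul_log_add_le_two_mul_toReal_jsDiv :
    integralMulLogRnDeriv P (mixture P Q) + integralMulLogRnDeriv Q (mixture P Q) ≤
      2 * (jsDiv P Q).toReal := by
  have hQ := klDivM_mixture_left Q P
  rw [mixture_comm Q P] at hQ
  have hjs : jsDiv P Q = 2⁻¹ * klDivM P (mixture P Q) + 2⁻¹ * klDivM Q (mixture P Q) := rfl
  rw [hjs, klDivM_mixture_left, hQ, ENNReal.toReal_add (by finiteness) (by finiteness)]
  simp only [ENNReal.toReal_mul, ENNReal.toReal_inv, ENNReal.toReal_ofNat, ENNReal.toReal_ofReal']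
  linarith [le_max_left (integralMulLogRnDeriv P (mixture P Q)) 0,
    le_max_left (integralMulLogRnDeriv Q (mixture P Q)) 0]

end Mixture

lemma integral_neg_softplus_neg_sub_integral_softplus_le {Ω : Type*} [MeasurableSpace Ω]
    (P Q : Measure Ω) [IsProbabilityMeasure P] [IsProbabilityMeasure Q] {T : Ω → ℝ}
    (hPint : Integrable (fun ω ↦ softplus (-T ω)) P)
    (hQint : Integrable (fun ω ↦ softplus (T ω)) Q) :
    (∫ ω, -softplus (-T ω) ∂P) - ∫ ω, softplus (T ω) ∂Q ≤
      integralMulLogRnDeriv P (mixture P Q) + integralMulLogRnDeriv Q (mixture P Q) - log 4 := by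
  have hPM := absolutelyContinuous_mixture_left P Q
  have hQM := absolutelyContinuous_mixture_left Q P
  have hφP := integrable_mul_log_toReal_rnDeriv_mixture P Q
  have hφQ := integrable_mul_log_toReal_rnDeriv_mixture Q P
  rw [mixture_comm Q P] at hQM hφQ
  have hiP := (integrable_toReal_rnDeriv_mul_iff hPM).2 hPint.fun_neg
  have hiQ := (integrable_toReal_rnDeriv_mul_iff hQM).2 hQint
  rw [integralMulLogRnDeriv, integralMulLogRnDeriv,
    ← integral_toReal_rnDeriv_mul hPM, ← integral_toReal_rnDeriv_mul hQM,
    ← integral_sub hiP hiQ, ← integral_add hφP hφQ,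
    show log 4 = ∫ _, log 4 ∂mixture P Q by simp,
    ← integral_sub (hφP.fun_add hφQ) (integrable_const _)]
  refine integral_mono_ae (hiP.sub hiQ) ((hφP.fun_add hφQ).sub (integrable_const _)) ?_
  filter_upwards [toReal_rnDeriv_mixture_add_toReal_rnDeriv_mixture P Q] with x hx
  exact mul_neg_softplus_neg_sub_mul_softplus_le ENNReal.toReal_nonneg ENNReal.toReal_nonneg hx
    (T x)

theorem softplus_js_bound_general {Ω : Type*} [MeasurableSpace Ω]
    (P Q : Measure Ω) [IsProbabilityMeasure P] [IsProbabilityMeasure Q]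
    (T : Ω → ℝ)
    (hPint : Integrable (fun ω => softplus (-T ω)) P)
    (hQint : Integrable (fun ω => softplus (T ω)) Q) :
    (∫ ω, -softplus (-T ω) ∂P) - (∫ ω, softplus (T ω) ∂Q) ≤
      2 * (jsDiv P Q).toReal - Real.log 4 := by
  linarith [integral_neg_softplus_neg_sub_integral_softplus_le P Q hPint hQint,
    integral_mul_log_add_le_two_mul_toReal_jsDiv P Q]

/-- Softplus parameterization of the variational Jensen–Shannon bound:
`∫ (−sp(−T)) dP − ∫ sp(T) dQ ≤ 2·JS(P, Q) − log 4`. -/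
theorem softplus_js_bound {Ω : Type*} [MeasurableSpace Ω]
    (P Q : Measure Ω) [IsProbabilityMeasure P] [IsProbabilityMeasure Q]
    (T : Ω → ℝ) (hT : Measurable T)
    (hPint : Integrable (fun ω => softplus (-T ω)) P)
    (hQint : Integrable (fun ω => softplus (T ω)) Q) :
    (∫ ω, -softplus (-T ω) ∂P) - (∫ ω, softplus (T ω) ∂Q) ≤
      2 * (jsDiv P Q).toReal - Real.log 4 :=
  softplus_js_bound_general P Q T hPint hQint
end

section
/- Let S be a finite nonempty type and let p, q : PMF S be such that p(s) + q(s) > 0 for every s ∈ S. Define the optimal discriminator D⋆(s) = p(s) / (p(s) + q(s)). Then (with the convention 0·log 0 = 0): ∑_s p(s) · log(D⋆(s)) + ∑_s q(s) · log(1 − D⋆(s)) = 2·JS(p, q) − log 4, where JS(p, q) = (1/2)·KL(p ‖ m) + (1/2)·KL(q ‖ m) and m(s) = (p(s) + q(s))/2. -/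
open scoped ENNReal

/-- Discrete Kullback–Leibler divergence between nonnegative functions on a finite type:
`∑_s f s · log(f s / g s)`, with the convention `0·log(0/g) = 0` (note `Real.log 0 = 0`
in Lean, so the formula realizes this convention). -/
noncomputable def klReal {S : Type*} [Fintype S] (f g : S → ℝ) : ℝ :=
  ∑ s, f s * Real.log (f s / g s)

/-!
Pointwise, `D⋆ = p / (p + q) = (p / m) / 2` and `1 - D⋆ = (q / m) / 2`, so
`p log D⋆ = p log (p / m) - p log 2` and `q log (1 - D⋆) = q log (q / m) - q log 2`.
Summing over `s`, the masses `∑ p = ∑ q = 1` turn the two `log 2` terms into `log 4`.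
-/

theorem PMF.sum_toReal_eq_one {S : Type*} [Fintype S] (r : PMF S) :
    ∑ s, (r s).toReal = 1 := by
  rw [← ENNReal.toReal_sum fun s _ => r.apply_ne_top s, ← tsum_fintype (L := .unconditional _),
    r.tsum_coe, ENNReal.toReal_one]

namespace Real

variable {a b : ℝ}

theorem mul_log_div_add_eq_mul_log_div_half_sub (ha : 0 ≤ a) (hb : 0 ≤ b) :
    a * log (a / (a + b)) = a * log (a / ((a + b) / 2)) - a * log 2 := by
  rcases ha.eq_or_lt with rfl | ha
  · simp
  · have hdouble : a / ((a + b) / 2) = 2 * (a / (a + b)) := by field_simp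
    rw [hdouble, log_mul two_ne_zero (by positivity)]
    ring

theorem mul_log_one_sub_div_add (ha : 0 ≤ a) (hb : 0 ≤ b) :
    b * log (1 - a / (a + b)) = b * log (b / (b + a)) := by
  rcases hb.eq_or_lt with rfl | hb
  · simp
  · have hsum : a + b ≠ 0 := by positivity
    rw [one_sub_div hsum, add_sub_cancel_left, add_comm b]

end Real

theorem optimal_discriminator_js_identity_general {S : Type*} [Fintype S]
    (p q : PMF S) :
    (∑ s, (p s).toReal * Real.log ((p s).toReal / ((p s).toReal + (q s).toReal))) +
      (∑ s, (q s).toReal *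
        Real.log (1 - (p s).toReal / ((p s).toReal + (q s).toReal))) =
    2 * ((1 / 2) * klReal (fun s => (p s).toReal)
            (fun s => ((p s).toReal + (q s).toReal) / 2) +
         (1 / 2) * klReal (fun s => (q s).toReal)
            (fun s => ((p s).toReal + (q s).toReal) / 2)) -
      Real.log 4 := by
  have hp_term (s : S) := Real.mul_log_div_add_eq_mul_log_div_half_sub
    (p s).toReal_nonneg (q s).toReal_nonneg
  have hq_term (s : S) : (q s).toReal * Real.log (1 - (p s).toReal / ((p s).toReal + (q s).toReal))
      = (q s).toReal * Real.log ((q s).toReal / (((p s).toReal + (q s).toReal) / 2))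
        - (q s).toReal * Real.log 2 := by
    rw [Real.mul_log_one_sub_div_add (p s).toReal_nonneg (q s).toReal_nonneg,
      Real.mul_log_div_add_eq_mul_log_div_half_sub (q s).toReal_nonneg (p s).toReal_nonneg,
      add_comm (q s).toReal]
  simp only [hp_term, hq_term, Finset.sum_sub_distrib, ← Finset.sum_mul, p.sum_toReal_eq_one,
    q.sum_toReal_eq_one, klReal, Real.log_four_eq]
  ring

/-- Optimal-discriminator identity for the adversarial objective: with
`D⋆(s) = p(s)/(p(s)+q(s))` and the mixture `m(s) = (p(s)+q(s))/2`,
`∑_s p(s)·log(D⋆(s)) + ∑_s q(s)·log(1 − D⋆(s)) = 2·JS(p, q) − log 4`,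
where `JS(p, q) = (1/2)·KL(p‖m) + (1/2)·KL(q‖m)`. -/
theorem optimal_discriminator_js_identity {S : Type*} [Fintype S] [Nonempty S]
    (p q : PMF S) (hpos : ∀ s, 0 < (p s).toReal + (q s).toReal) :
    (∑ s, (p s).toReal * Real.log ((p s).toReal / ((p s).toReal + (q s).toReal))) +
      (∑ s, (q s).toReal *
        Real.log (1 - (p s).toReal / ((p s).toReal + (q s).toReal))) =
    2 * ((1 / 2) * klReal (fun s => (p s).toReal)
            (fun s => ((p s).toReal + (q s).toReal) / 2) +
         (1 / 2) * klReal (fun s => (q s).toReal)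
            (fun s => ((p s).toReal + (q s).toReal) / 2)) -
      Real.log 4 :=
  optimal_discriminator_js_identity_general p q
end
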